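/- Let 0 < b < c, 0 ≤ z₁ ≤ 1, 0 ≤ z₂ ≤ 1 and z₃ ≥ 0. Then |₁F₁(b;c;z₁z₂z₃) − e^{(z₂−1)z₃} ₁F₁(b;c;z₁z₃)| ≤ (1/4) e^{z₃}. -/

import Mathlib

/-!
Write `rₙ = (b)ₙ / (c)ₙ`, `x = z₁z₃`, `y = z₁z₂z₃` and `E = e^{(z₂-1)z₃}`. Then
`₁F₁(b;c;y) - E ₁F₁(b;c;x) = ∑ rₙ (yⁿ - E xⁿ) / n!`, where `(rₙ)` is nonnegative and
decreases from `r₀ = 1`.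
By Abel summation it suffices to bound the partial sums of `∑ (yⁿ - E xⁿ) / n!`.
They are nonnegative because the truncated exponential satisfies `eₖ(x) ≤ eₖ(y) e^{x-y}` and
`E ≤ e^{y-x}`, and at most `(1 - E) e^y ≤ (1 - e^{a - z₃}) e^a` with `a = z₂z₃`,
which is `e^{z₃} t (1 - t) ≤ e^{z₃} / 4` for `t = e^{a - z₃}`.
-/

open Real MeasureTheory

/-- Classical Euler beta function `B(x,y) = ∫₀¹ t^(x-1) (1-t)^(y-1) dt`. -/
noncomputable def eulerBeta (x y : ℝ) : ℝ :=
  ∫ t in (0:ℝ)..1, t ^ (x - 1) * (1 - t) ^ (y - 1)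

/-- `λ_{x,y} = x^x y^y / (x+y)^(x+y)`; the convention `0^0 = 1` is automatic for `rpow`. -/
noncomputable def lam (x y : ℝ) : ℝ := x ^ x * y ^ y / (x + y) ^ (x + y)

/-- Pochhammer symbol `(x)_n = x (x+1) ⋯ (x+n-1)`. -/
noncomputable def poch (x : ℝ) (n : ℕ) : ℝ := ∏ k ∈ Finset.range n, (x + k)

/-- Confluent hypergeometric (Kummer) function `₁F₁(b;c;z)`. -/
noncomputable def oneF1 (b c z : ℝ) : ℝ :=
  ∑' n : ℕ, poch b n / poch c n * z ^ n / (Nat.factorial n : ℝ)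

open Finset

open scoped Nat

lemma add_pow_div_factorial (u v : ℝ) (m : ℕ) :
    (u + v) ^ m / m ! = ∑ k ∈ range (m + 1), u ^ k / k ! * (v ^ (m - k) / (m - k)!) := by
  rw [add_pow, sum_div]
  refine sum_congr rfl fun k hk => ?_
  rw [Nat.cast_choose ℝ (Nat.lt_succ_iff.mp (mem_range.mp hk))]
  field_simp

lemma sum_range_add_pow_div_factorial_le {u v : ℝ} (hu : 0 ≤ u) (hv : 0 ≤ v) (N : ℕ) :
    ∑ m ∈ range N, (u + v) ^ m / m ! ≤ (∑ m ∈ range N, u ^ m / m !) * exp v := by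
  calc ∑ m ∈ range N, (u + v) ^ m / m !
      = ∑ m ∈ range N, u ^ m / m ! * ∑ k ∈ range (N - m), v ^ k / k ! := by
        simp_rw [add_pow_div_factorial]
        rw [sum_range_diag_flip N fun k j => u ^ k / k ! * (v ^ j / j !)]
        simp_rw [mul_sum]
    _ ≤ ∑ m ∈ range N, u ^ m / m ! * exp v := by
        gcongr
        exact sum_le_exp_of_nonneg hv _
    _ = (∑ m ∈ range N, u ^ m / m !) * exp v := (sum_mul ..).symm

lemma sum_range_sub_mul_mem_Icc {x y E : ℝ} (hy : 0 ≤ y) (hyx : y ≤ x) (hE₀ : 0 ≤ E)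
    (hE : E ≤ exp (y - x)) (k : ℕ) :
    ∑ i ∈ range k, (y ^ i / (i ! : ℝ) - E * (x ^ i / i !)) ∈ Set.Icc 0 ((1 - E) * exp y) := by
  rw [sum_sub_distrib, ← mul_sum]
  have hSyx : ∑ i ∈ range k, y ^ i / (i ! : ℝ) ≤ ∑ i ∈ range k, x ^ i / (i ! : ℝ) := by gcongr
  have hSx₀ : 0 ≤ ∑ i ∈ range k, x ^ i / (i ! : ℝ) := by have := hy.trans hyx; positivity
  set Sx := ∑ i ∈ range k, x ^ i / (i ! : ℝ)
  set Sy := ∑ i ∈ range k, y ^ i / (i ! : ℝ)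
  have hSx : Sx ≤ Sy * exp (x - y) := by
    simpa using sum_range_add_pow_div_factorial_le hy (sub_nonneg.mpr hyx) k
  have hE₁ : E ≤ 1 := hE.trans (exp_le_one_iff.mpr (by linarith))
  constructor
  · rw [sub_nonneg]
    calc E * Sx ≤ exp (y - x) * (Sy * exp (x - y)) := by gcongr
      _ = Sy := by rw [mul_left_comm, ← exp_add, sub_add_sub_cancel, sub_self, exp_zero, mul_one]
  · have hSy : Sy ≤ exp y := sum_le_exp_of_nonneg hy k
    nlinarith [mul_le_mul_of_nonneg_left hSyx hE₀,
      mul_le_mul_of_nonneg_left hSy (sub_nonneg.mpr hE₁)]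

/-- Abel's inequality. -/
lemma sum_range_mul_mem_Icc_of_antitone {r g : ℕ → ℝ} {M : ℝ} (hr : Antitone r)
    (hr₀ : ∀ n, 0 ≤ r n) (hg : ∀ k, ∑ i ∈ range k, g i ∈ Set.Icc 0 M) (N : ℕ) :
    ∑ i ∈ range N, r i * g i ∈ Set.Icc 0 (r 0 * M) := by
  have key : ∀ N, ∑ i ∈ range N, r i * g i - r N * ∑ i ∈ range N, g i ∈
      Set.Icc 0 ((r 0 - r N) * M) := by
    intro N
    induction N with
    | zero => simp
    | succ N ih =>
      obtain ⟨hS₀, hSM⟩ := hg (N + 1)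
      have hstep : 0 ≤ r N - r (N + 1) := sub_nonneg.mpr (hr N.le_succ)
      have h₀ := mul_nonneg hstep hS₀
      have hM := mul_le_mul_of_nonneg_left hSM hstep
      rw [sum_range_succ] at hS₀ hSM h₀ hM ⊢
      rw [sum_range_succ]
      constructor <;> nlinarith [ih.1, ih.2]
  obtain ⟨hS₀, hSM⟩ := hg N
  obtain ⟨h₀, hM⟩ := key N
  constructor <;> nlinarith [mul_nonneg (hr₀ N) hS₀, mul_le_mul_of_nonneg_left hSM (hr₀ N)]

lemma mem_Icc_of_hasSum_mul_of_antitone {r g : ℕ → ℝ} {M a : ℝ} (hr : Antitone r)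
    (hr₀ : ∀ n, 0 ≤ r n) (hg : ∀ k, ∑ i ∈ range k, g i ∈ Set.Icc 0 M)
    (h : HasSum (fun n => r n * g n) a) : a ∈ Set.Icc 0 (r 0 * M) :=
  isClosed_Icc.mem_of_tendsto h.tendsto_sum_nat
    (Filter.Eventually.of_forall (sum_range_mul_mem_Icc_of_antitone hr hr₀ hg))

lemma poch_zero (x : ℝ) : poch x 0 = 1 := prod_range_zero _

lemma poch_succ (x : ℝ) (n : ℕ) : poch x (n + 1) = poch x n * (x + n) := prod_range_succ _ _

lemma poch_pos {x : ℝ} (hx : 0 < x) (n : ℕ) : 0 < poch x n :=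
  prod_pos fun k _ => by positivity

section PochhammerRatio

variable {b c : ℝ} (hb : 0 < b) (hbc : b ≤ c)
include hb hbc

lemma poch_div_poch_nonneg (n : ℕ) : 0 ≤ poch b n / poch c n :=
  div_nonneg (poch_pos hb n).le (poch_pos (hb.trans_le hbc) n).le

lemma antitone_poch_div_poch : Antitone fun n => poch b n / poch c n := by
  refine antitone_nat_of_succ_le fun n => ?_
  have hc : 0 < c + n := by have := hb.trans_le hbc; positivity
  have hratio : (b + n) / (c + n) ≤ 1 := (div_le_one hc).mpr (by linarith)
  calc poch b (n + 1) / poch c (n + 1) = poch b n / poch c n * ((b + n) / (c + n)) := by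
        rw [poch_succ, poch_succ, mul_div_mul_comm]
    _ ≤ poch b n / poch c n := mul_le_of_le_one_right (poch_div_poch_nonneg hb hbc n) hratio

lemma poch_div_poch_le_one (n : ℕ) : poch b n / poch c n ≤ 1 := by
  simpa [poch_zero] using antitone_poch_div_poch hb hbc n.zero_le

lemma summable_oneF1 (z : ℝ) :
    Summable fun n : ℕ => poch b n / poch c n * z ^ n / n ! := by
  refine (summable_pow_div_factorial |z|).of_norm_bounded fun n => ?_
  rw [norm_div, norm_mul, norm_pow, Real.norm_eq_abs, Real.norm_eq_abs,
    abs_of_nonneg (poch_div_poch_nonneg hb hbc n), Real.norm_natCast]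
  gcongr
  exact mul_le_of_le_one_left (by positivity) (poch_div_poch_le_one hb hbc n)

lemma oneF1_sub_mul_oneF1_mem_Icc {x y E : ℝ} (hy : 0 ≤ y) (hyx : y ≤ x) (hE₀ : 0 ≤ E)
    (hE : E ≤ exp (y - x)) :
    oneF1 b c y - E * oneF1 b c x ∈ Set.Icc 0 ((1 - E) * exp y) := by
  have hsum : HasSum (fun n => poch b n / poch c n * (y ^ n / (n ! : ℝ) - E * (x ^ n / n !)))
      (oneF1 b c y - E * oneF1 b c x) := by
    refine ((summable_oneF1 hb hbc y).hasSum.sub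
      ((summable_oneF1 hb hbc x).hasSum.mul_left E)).congr_fun fun n => ?_
    ring
  simpa [poch_zero] using mem_Icc_of_hasSum_mul_of_antitone (antitone_poch_div_poch hb hbc)
    (poch_div_poch_nonneg hb hbc) (sum_range_sub_mul_mem_Icc hy hyx hE₀ hE) hsum

end PochhammerRatio

lemma one_sub_exp_sub_mul_exp_le (a z : ℝ) : (1 - exp (a - z)) * exp a ≤ exp z / 4 := by
  have ha : exp a = exp z * exp (a - z) := by rw [← exp_add, add_sub_cancel]
  rw [ha]
  nlinarith [sq_nonneg (exp (a - z) - 1 / 2), exp_pos z]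

theorem stmt17 (b c z₁ z₂ z₃ : ℝ) (hb : 0 < b) (hbc : b < c)
    (hz₁ : z₁ ∈ Set.Icc (0:ℝ) 1) (hz₂ : z₂ ∈ Set.Icc (0:ℝ) 1) (hz₃ : 0 ≤ z₃) :
    |oneF1 b c (z₁ * z₂ * z₃) - Real.exp ((z₂ - 1) * z₃) * oneF1 b c (z₁ * z₃)| ≤
      1 / 4 * Real.exp z₃ := by
  obtain ⟨hz₁₀, hz₁₁⟩ := hz₁
  obtain ⟨hz₂₀, hz₂₁⟩ := hz₂
  have hy : 0 ≤ z₁ * z₂ * z₃ := by positivity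
  have hyx : z₁ * z₂ * z₃ ≤ z₁ * z₃ := by nlinarith [mul_nonneg hz₁₀ hz₃]
  have hE : exp ((z₂ - 1) * z₃) ≤ exp (z₁ * z₂ * z₃ - z₁ * z₃) :=
    exp_le_exp.mpr (by nlinarith [mul_nonneg (sub_nonneg.mpr hz₁₁) hz₃])
  obtain ⟨hlow, hup⟩ :=
    oneF1_sub_mul_oneF1_mem_Icc hb hbc.le hy hyx (exp_pos _).le hE
  have hE₁ : exp ((z₂ - 1) * z₃) ≤ 1 := exp_le_one_iff.mpr (by nlinarith)
  have hexp : exp (z₁ * z₂ * z₃) ≤ exp (z₂ * z₃) :=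
    exp_le_exp.mpr (by nlinarith [mul_nonneg hz₂₀ hz₃])
  have hquarter := one_sub_exp_sub_mul_exp_le (z₂ * z₃) z₃
  rw [show z₂ * z₃ - z₃ = (z₂ - 1) * z₃ by ring] at hquarter
  rw [abs_of_nonneg hlow]
  nlinarith [mul_le_mul_of_nonneg_left hexp (sub_nonneg.mpr hE₁)]
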